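/- arXiv:1509.02563 — 5 statements merged into one kernel-verified Lean document; each statement's English description precedes it below -/
import Mathlib

section
/- Let a, b, c be points in the Euclidean plane such that dist(a,c) ≤ dist(a,b) and the angle ∠bac is at most α, where 0 ≤ α < π/3. Then dist(b,c) ≤ dist(a,b) − (1 − 2·sin(α/2))·dist(a,c). -/
theorem theta_basic_yao_lemma (a b c : EuclideanSpace ℝ (Fin 2)) (α : ℝ)
    (hα0 : 0 ≤ α) (hα : α < Real.pi / 3)
    (hd : dist a c ≤ dist a b)
    (hang : EuclideanGeometry.angle b a c ≤ α) :
    dist b c ≤ dist a b - (1 - 2 * Real.sin (α / 2)) * dist a c := by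
  have hpi := Real.pi_pos
  set θ := EuclideanGeometry.angle b a c with hθ
  have hθ0 : 0 ≤ θ := EuclideanGeometry.angle_nonneg _ _ _
  have hlc : dist b c ^ 2 = dist b a ^ 2 + dist a c ^ 2 -
      2 * dist b a * dist a c * Real.cos θ := by
    have := EuclideanGeometry.law_cos b a c
    rw [dist_comm c a] at this
    nlinarith [this]
  have hcos : Real.cos α ≤ Real.cos θ := by
    apply Real.cos_le_cos_of_nonneg_of_le_pi hθ0 _ hang
    linarith
  have hsinhalf : Real.cos α = 1 - 2 * Real.sin (α / 2) ^ 2 := by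
    have hc : Real.cos α = Real.cos (2 * (α / 2)) := by ring_nf
    rw [hc, Real.cos_two_mul']
    have := Real.sin_sq_add_cos_sq (α / 2)
    linarith
  rw [hsinhalf] at hcos
  have hs0 : 0 ≤ Real.sin (α / 2) := Real.sin_nonneg_of_nonneg_of_le_pi (by linarith) (by linarith)
  have hs1 : Real.sin (α / 2) ≤ 1 := Real.sin_le_one _
  have hac0 : 0 ≤ dist a c := dist_nonneg
  have hbc0 : 0 ≤ dist b c := dist_nonneg
  have hba : dist b a = dist a b := dist_comm b a
  have hR0 : 0 ≤ dist a b - dist a c + 2 * Real.sin (α / 2) * dist a c := by nlinarith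
  have hsq : dist b c ^ 2 ≤ (dist a b - dist a c + 2 * Real.sin (α / 2) * dist a c) ^ 2 := by
    rw [hlc, hba]
    have hab0 : (0:ℝ) ≤ dist a b := dist_nonneg
    nlinarith [mul_nonneg (mul_nonneg (mul_nonneg hs0 hac0) (by linarith : (0:ℝ) ≤ dist a b - dist a c)) (by linarith : (0:ℝ) ≤ 1 - Real.sin (α / 2)),
      mul_nonneg (mul_nonneg hab0 hac0) (by linarith : (0:ℝ) ≤ Real.cos θ - (1 - 2 * Real.sin (α / 2) ^ 2))]
  have : dist b c ≤ dist a b - dist a c + 2 * Real.sin (α / 2) * dist a c := by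
    nlinarith
  linarith [this]
end

section
/- (sin(3π/5) / sin(3π/10)) · tan(π/5) < 1. -/
theorem theta5_case1_ratio_lt_one :
    Real.sin (3 * Real.pi / 5) / Real.sin (3 * Real.pi / 10) * Real.tan (Real.pi / 5) < 1 := by
  have hcpos : 0 < Real.cos (Real.pi / 5) := by
    rw [Real.cos_pi_div_five]
    positivity
  have h1 : Real.sin (3 * Real.pi / 5) = 2 * Real.sin (Real.pi / 5) * Real.cos (Real.pi / 5) := by
    rw [show 3 * Real.pi / 5 = Real.pi - 2 * (Real.pi / 5) by ring, Real.sin_pi_sub,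
      Real.sin_two_mul]
  have h2 : Real.sin (3 * Real.pi / 10) = Real.cos (Real.pi / 5) := by
    rw [show 3 * Real.pi / 10 = Real.pi / 2 - Real.pi / 5 by ring, Real.sin_pi_div_two_sub]
  rw [h1, h2, Real.tan_eq_sin_div_cos]
  have hc : Real.cos (Real.pi / 5) = (1 + Real.sqrt 5) / 4 := Real.cos_pi_div_five
  have hs : Real.sin (Real.pi / 5) ^ 2 = 1 - Real.cos (Real.pi / 5) ^ 2 := by
    have := Real.sin_sq_add_cos_sq (Real.pi / 5)
    linarith
  have hne : Real.cos (Real.pi / 5) ≠ 0 := ne_of_gt hcpos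
  have key : 2 * Real.sin (Real.pi / 5) * Real.cos (Real.pi / 5) / Real.cos (Real.pi / 5) *
      (Real.sin (Real.pi / 5) / Real.cos (Real.pi / 5)) =
      2 * Real.sin (Real.pi / 5) ^ 2 / Real.cos (Real.pi / 5) := by
    field_simp
  rw [key, div_lt_one hcpos, hs, hc]
  have h5 : Real.sqrt 5 ^ 2 = 5 := Real.sq_sqrt (by norm_num)
  have h5gt : Real.sqrt 5 > 2 := by
    nlinarith [Real.sqrt_nonneg 5]
  nlinarith
end

section
/- The equality 1/cos(π/5) + 2·(2+√5) · (sin(3π/5)/sin(3π/10)) · tan(π/5) ≤ 2·(2+√5) holds. -/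
/-!
The inequality is in fact an equality. Since `sin (3π/5) = sin (2π/5)` and `sin (3π/10) = cos (π/5)`,
the ratio of sines is `2 sin (π/5)`, so with `c = cos (π/5) = (1 + √5)/4` and
`sin² (π/5) = 1 - c² = (5 - √5)/8` the left-hand side is `(1 + 4 (2 + √5) sin² (π/5)) / c`,
which simplifies to `2 (2 + √5)`.
-/

open Real

lemma Real.sin_pi_sub_two_mul_div_sin_pi_div_two_sub {x : ℝ} (hx : cos x ≠ 0) :
    sin (π - 2 * x) / sin (π / 2 - x) = 2 * sin x := by
  rw [sin_pi_sub, sin_pi_div_two_sub, sin_two_mul]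
  field_simp

lemma Real.sin_three_pi_div_five_div_sin_three_pi_div_ten :
    sin (3 * π / 5) / sin (3 * π / 10) = 2 * sin (π / 5) := by
  rw [show 3 * π / 5 = π - 2 * (π / 5) by ring, show 3 * π / 10 = π / 2 - π / 5 by ring]
  exact sin_pi_sub_two_mul_div_sin_pi_div_two_sub (by rw [cos_pi_div_five]; positivity)

lemma Real.sin_sq_pi_div_five : sin (π / 5) ^ 2 = (5 - √5) / 8 := by
  have h5 : √5 ^ 2 = 5 := sq_sqrt (by norm_num)
  rw [sin_sq, cos_pi_div_five]
  linear_combination (-1 / 16 : ℝ) * h5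

lemma theta5_constant_eq :
    1 / cos (π / 5) + 2 * (2 + √5) * (sin (3 * π / 5) / sin (3 * π / 10)) * tan (π / 5) =
      2 * (2 + √5) := by
  have h5 : √5 ^ 2 = 5 := sq_sqrt (by norm_num)
  have hs := sin_sq_pi_div_five
  rw [sin_three_pi_div_five_div_sin_three_pi_div_ten, tan_eq_sin_div_cos, cos_pi_div_five]
  field_simp
  linear_combination 16 * (2 + √5) * hs - 4 * h5

theorem theta5_constant_inequality :
    1 / Real.cos (Real.pi / 5) +
      2 * (2 + Real.sqrt 5) * (Real.sin (3 * Real.pi / 5) / Real.sin (3 * Real.pi / 10)) *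
        Real.tan (Real.pi / 5) ≤ 2 * (2 + Real.sqrt 5) :=
  theta5_constant_eq.le
end

section
/- The sum 1/cos(π/5) + 2·(2·sin(π/5)·tan(π/5)) + (sin(π/10)/sin(3π/5))·tan(π/5) + (sin(3π/10)/sin(3π/5))·tan(π/5) equals (11·√5 − 17)/2. -/
/-!
Writing `c = cos (π / 5)`, every term depends on `c` alone: `sin (3π/5) = sin (2π/5)` cancels the
sine in `tan (π / 5)`, while `sin (π/10) = cos (2π/5) = 2c² - 1` and `sin (3π/10) = c`.
Since `c` is a root of `4c² - 2c - 1`, we have `1/c = 4c - 2` and `1/c² = 8 - 8c`, so the sum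
collapses to `22c - 14`, which is `(11√5 - 17)/2` for `c = (1 + √5)/4`.
-/

open Real

lemma sin_mul_tan (x : ℝ) : sin x * tan x = (1 - cos x ^ 2) / cos x := by
  rw [tan_eq_sin_div_cos, ← sin_sq, mul_div_assoc', sq]

lemma div_sin_two_mul_mul_tan {x : ℝ} (hx : sin x ≠ 0) (y : ℝ) :
    y / sin (2 * x) * tan x = y / (2 * cos x ^ 2) := by
  rw [sin_two_mul, tan_eq_sin_div_cos]
  field_simp

lemma sum_eq_of_four_mul_sq_sub_two_mul_sub_one_eq_zero {c : ℝ} (hc : 4 * c ^ 2 - 2 * c - 1 = 0) :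
    1 / c + 2 * (2 * ((1 - c ^ 2) / c)) + (2 * c ^ 2 - 1) / (2 * c ^ 2) + c / (2 * c ^ 2) =
      22 * c - 14 := by
  have hc0 : c ≠ 0 := by rintro rfl; norm_num at hc
  field_simp
  linear_combination (1 - 13 * c) * hc

theorem theta5_lower_bound_path_length :
    1 / Real.cos (Real.pi / 5) +
      2 * (2 * Real.sin (Real.pi / 5) * Real.tan (Real.pi / 5)) +
      (Real.sin (Real.pi / 10) / Real.sin (3 * Real.pi / 5)) * Real.tan (Real.pi / 5) +
      (Real.sin (3 * Real.pi / 10) / Real.sin (3 * Real.pi / 5)) * Real.tan (Real.pi / 5) =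
    (11 * Real.sqrt 5 - 17) / 2 := by
  have hsin : sin (π / 5) ≠ 0 :=
    (sin_pos_of_pos_of_lt_pi (by positivity) (by linarith [pi_pos])).ne'
  have h3π5 : sin (3 * π / 5) = sin (2 * (π / 5)) := by
    rw [← sin_pi_sub]; ring_nf
  have hπ10 : sin (π / 10) = 2 * cos (π / 5) ^ 2 - 1 := by
    rw [← cos_pi_div_two_sub, ← cos_two_mul]; ring_nf
  have h3π10 : sin (3 * π / 10) = cos (π / 5) := by
    rw [← cos_pi_div_two_sub]; ring_nf
  rw [h3π5, hπ10, h3π10, mul_assoc 2 (sin _), sin_mul_tan, div_sin_two_mul_mul_tan hsin,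
    div_sin_two_mul_mul_tan hsin,
    sum_eq_of_four_mul_sq_sub_two_mul_sub_one_eq_zero quadratic_root_cos_pi_div_five,
    cos_pi_div_five]
  ring
end

section
/- Let T be a spanning tree on n ≥ 6 points placed at the vertices of a regular n-gon inscribed in a circle (i.e., points p_j = (cos(2πj/n), sin(2πj/n)) for j = 0,…,n−1). Then the spanning ratio of T is at least n/(2π); that is, there exist two points x, y among them such that the length of the unique path in T between x and y is at least (n/(2π))·dist(x,y). -/
/-!
Let `c` be a centroid of the tree, so that every component of `T - c` has at most `n / 2`
vertices. The polygon vertices at angle at least `π / 3` from `c` form an arc of more than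
`n / 2` vertices, so two consecutive ones, `x` and `y`, lie in different components of `T - c`.
Every walk from `x` to `y` therefore passes through `c` and has length at least
`dist x c ≥ 2 sin (π / 6) = 1`, while `dist x y = 2 sin (π / n) ≤ 2π / n`.
-/

/-- The total Euclidean length of a walk, with vertices placed by `p`. -/
noncomputable def walkLength {n : ℕ} (p : Fin n → EuclideanSpace ℝ (Fin 2))
    {T : SimpleGraph (Fin n)} {x y : Fin n} (w : T.Walk x y) : ℝ :=
  (w.darts.map (fun d => dist (p d.toProd.1) (p d.toProd.2))).sum

open Finset Real
open Fin.NatCast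

namespace SimpleGraph

variable {V : Type*} {G : SimpleGraph V} {a b c d u : V}

def ReachableAvoiding (G : SimpleGraph V) (c a b : V) : Prop :=
  ∃ w : G.Walk a b, c ∉ w.support

namespace ReachableAvoiding

lemma refl (h : a ≠ c) : G.ReachableAvoiding c a a :=
  ⟨.nil, by simpa using h.symm⟩

lemma symm (h : G.ReachableAvoiding c a b) : G.ReachableAvoiding c b a :=
  let ⟨w, hw⟩ := h
  ⟨w.reverse, by simpa using hw⟩

lemma trans (h₁ : G.ReachableAvoiding c a b) (h₂ : G.ReachableAvoiding c b d) :
    G.ReachableAvoiding c a d :=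
  let ⟨w₁, hw₁⟩ := h₁
  let ⟨w₂, hw₂⟩ := h₂
  ⟨w₁.append w₂, by simp [hw₁, hw₂]⟩

lemma left_ne (h : G.ReachableAvoiding c a b) : a ≠ c := by
  obtain ⟨w, hw⟩ := h
  rintro rfl
  exact hw w.start_mem_support

lemma right_ne (h : G.ReachableAvoiding c a b) : b ≠ c :=
  h.symm.left_ne

end ReachableAvoiding

lemma Connected.exists_adj_reachableAvoiding (hG : G.Connected) (h : a ≠ c) :
    ∃ u, G.Adj c u ∧ G.ReachableAvoiding c u a := by
  obtain ⟨P, hP⟩ := hG.exists_isPath c a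
  cases P with
  | nil => exact absurd rfl h
  | cons hcu q => exact ⟨_, hcu, q, (Walk.cons_isPath_iff _ _).1 hP |>.2⟩

lemma Connected.reachableAvoiding_or (hG : G.Connected) (huc : u ≠ c) (a : V) :
    G.ReachableAvoiding u a c ∨ G.ReachableAvoiding c a u := by
  obtain ⟨P, hP⟩ := hG.exists_isPath a c
  by_cases hu : u ∈ P.support
  · classical
    exact .inr ⟨P.takeUntil u hu, Walk.endpoint_notMem_support_takeUntil hP hu huc.symm⟩
  · exact .inl ⟨P, hu⟩

lemma IsAcyclic.not_reachableAvoiding_and (hG : G.IsAcyclic) (hcu : G.Adj c u) :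
    ¬ (G.ReachableAvoiding u c a ∧ G.ReachableAvoiding c u a) := by
  rintro ⟨⟨w₁, hw₁⟩, ⟨w₂, hw₂⟩⟩
  have hbridge := isAcyclic_iff_forall_isBridge.1 hG (G.mem_edgeSet.2 hcu)
  rcases List.mem_append.1 <| Walk.edges_append _ _ ▸
    isBridge_iff_forall_walk_mem_edges.1 hbridge (w₁.append w₂.reverse) with h | h
  · exact hw₁ (w₁.snd_mem_support_of_mem_edges h)
  · exact hw₂ (w₂.fst_mem_support_of_mem_edges (by simpa using h))

section Fintype

variable [Fintype V]

-- The vertex set of the component of `a` in `G - c`; empty when `a = c`.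
open Classical in
noncomputable def componentAvoiding (G : SimpleGraph V) (c a : V) : Finset V :=
  {b | G.ReachableAvoiding c a b}

@[simp]
lemma mem_componentAvoiding : b ∈ G.componentAvoiding c a ↔ G.ReachableAvoiding c a b := by
  simp [componentAvoiding]

lemma componentAvoiding_self : G.componentAvoiding c c = ∅ :=
  eq_empty_of_forall_notMem fun _ h => (mem_componentAvoiding.1 h).left_ne rfl

lemma ReachableAvoiding.componentAvoiding_eq (h : G.ReachableAvoiding c a b) :
    G.componentAvoiding c a = G.componentAvoiding c b := by
  ext d
  simp only [mem_componentAvoiding]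
  exact ⟨h.symm.trans, h.trans⟩

lemma IsAcyclic.disjoint_componentAvoiding (hG : G.IsAcyclic) (hcu : G.Adj c u) :
    Disjoint (G.componentAvoiding u c) (G.componentAvoiding c u) :=
  Finset.disjoint_left.2 fun _ h₁ h₂ =>
    hG.not_reachableAvoiding_and hcu
      ⟨mem_componentAvoiding.1 h₁, mem_componentAvoiding.1 h₂⟩

lemma Connected.componentAvoiding_ssubset (hG : G.Connected) (huc : u ≠ c)
    (hb : ¬ G.ReachableAvoiding u b c) :
    G.componentAvoiding u b ⊂ G.componentAvoiding c u := by
  refine ssubset_iff_of_subset (fun w hw => ?_) |>.2 ⟨u, ?_, ?_⟩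
  · have hbw := mem_componentAvoiding.1 hw
    refine mem_componentAvoiding.2 ((hG.reachableAvoiding_or huc w).resolve_left ?_).symm
    exact fun hwc => hb (hbw.trans hwc)
  · exact mem_componentAvoiding.2 (.refl huc)
  · exact fun h => (mem_componentAvoiding.1 h).right_ne rfl

def IsCentroid (G : SimpleGraph V) (c : V) : Prop :=
  ∀ a, 2 * #(G.componentAvoiding c a) ≤ Fintype.card V

-- The component of `G - u` containing `c` is disjoint from `G.componentAvoiding c u`;
-- every other one lies inside it and misses `u`.
lemma IsTree.card_componentAvoiding_lt (hT : G.IsTree) (hcu : G.Adj c u)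
    (hbig : Fintype.card V < 2 * #(G.componentAvoiding c u)) (b : V) :
    #(G.componentAvoiding u b) < #(G.componentAvoiding c u) := by
  by_cases hb : G.ReachableAvoiding u b c
  · classical
    have hsum := card_union_of_disjoint (hT.isAcyclic.disjoint_componentAvoiding hcu) ▸
      card_le_univ (G.componentAvoiding u c ∪ G.componentAvoiding c u)
    rw [hb.componentAvoiding_eq]
    omega
  · exact card_lt_card (hT.connected.componentAvoiding_ssubset hcu.ne' hb)

theorem IsTree.exists_isCentroid (hT : G.IsTree) : ∃ c, G.IsCentroid c := by
  have := hT.connected.nonempty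
  set maxCard : V → ℕ := fun c => univ.sup fun a => #(G.componentAvoiding c a)
  obtain ⟨c, -, hc⟩ := exists_min_image univ maxCard univ_nonempty
  refine ⟨c, fun a => ?_⟩
  by_contra! hbig
  have hac : a ≠ c := by
    rintro rfl
    simp [componentAvoiding_self] at hbig
  obtain ⟨u, hcu, hua⟩ := hT.connected.exists_adj_reachableAvoiding hac
  rw [← hua.componentAvoiding_eq] at hbig
  have hu : maxCard u < #(G.componentAvoiding c u) :=
    (Finset.sup_lt_iff (by rw [Nat.bot_eq_zero]; omega)).2 fun b _ =>
      hT.card_componentAvoiding_lt hcu hbig b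
  have hcu_le : #(G.componentAvoiding c u) ≤ maxCard c :=
    le_sup (f := fun a => #(G.componentAvoiding c a)) (mem_univ u)
  exact (hc u (mem_univ u)).not_gt (hu.trans_le hcu_le)

end Fintype

lemma IsCentroid.exists_step_not_reachableAvoiding {n : ℕ} [NeZero n] {T : SimpleGraph (Fin n)}
    {c : Fin n} (hc : T.IsCentroid c) {a b : ℕ} (ha : 0 < a) (hb : b < n)
    (hab : n < 2 * (b + 1 - a)) :
    ∃ k, a ≤ k ∧ k < b ∧ ¬ T.ReachableAvoiding c (c + k) (c + k + 1) := by
  -- otherwise the arc `c + a, …, c + b` lies in one component of `T - c`, too big for a centroid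
  by_contra! hsteps
  have hinj : Set.InjOn (fun k : ℕ => c + (k : Fin n)) (Icc a b) := by
    intro k₁ hk₁ k₂ hk₂ h
    simp only [coe_Icc, Set.mem_Icc] at hk₁ hk₂
    simpa [Nat.mod_eq_of_lt (hk₁.2.trans_lt hb), Nat.mod_eq_of_lt (hk₂.2.trans_lt hb)]
      using congrArg Fin.val (add_left_cancel h)
  have hne : c + (a : Fin n) ≠ c := by
    simpa [Fin.natCast_eq_zero] using Nat.not_dvd_of_pos_of_lt ha (by omega)
  have harc : ∀ k ∈ Icc a b, c + (k : Fin n) ∈ T.componentAvoiding c (c + a) := by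
    intro k hk
    rw [mem_Icc] at hk
    rw [mem_componentAvoiding]
    induction k, hk.1 using Nat.le_induction with
    | base => exact .refl hne
    | succ k hak ih =>
      simpa [add_assoc] using (ih ⟨hak, by omega⟩).trans (hsteps k hak (by omega))
  have hcard := card_le_card (image_subset_iff.2 harc)
  rw [card_image_of_injOn hinj, Nat.card_Icc] at hcard
  have := hc (c + a)
  rw [Fintype.card_fin] at this
  omega

end SimpleGraph

section walkLength

variable {n : ℕ} {T : SimpleGraph (Fin n)} (p : Fin n → EuclideanSpace ℝ (Fin 2))
  {x y c : Fin n}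

lemma walkLength_cons {v : Fin n} (h : T.Adj x v) (w : T.Walk v y) :
    walkLength p (.cons h w) = dist (p x) (p v) + walkLength p w := by
  simp [walkLength]

lemma walkLength_append (w₁ : T.Walk x c) (w₂ : T.Walk c y) :
    walkLength p (w₁.append w₂) = walkLength p w₁ + walkLength p w₂ := by
  simp [walkLength]

lemma dist_le_walkLength (w : T.Walk x y) : dist (p x) (p y) ≤ walkLength p w := by
  induction w with
  | nil => simp [walkLength]
  | cons h w ih =>
    rw [walkLength_cons]
    exact (dist_triangle _ _ _).trans (by gcongr)

lemma dist_add_dist_le_walkLength (w : T.Walk x y) (hc : c ∈ w.support) :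
    dist (p x) (p c) + dist (p c) (p y) ≤ walkLength p w := by
  classical
  rw [← w.take_spec hc, walkLength_append]
  exact add_le_add (dist_le_walkLength p _) (dist_le_walkLength p _)

end walkLength

lemma EuclideanSpace.dist_eq_two_mul_abs_sin {x y : EuclideanSpace ℝ (Fin 2)} {A B : ℝ}
    (hx : x 0 = cos A ∧ x 1 = sin A) (hy : y 0 = cos B ∧ y 1 = sin B) :
    dist x y = 2 * |sin ((A - B) / 2)| := by
  have hchord : (cos A - cos B) ^ 2 + (sin A - sin B) ^ 2 = (2 * sin ((A - B) / 2)) ^ 2 := by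
    have hcos := cos_sq ((A - B) / 2)
    have := sin_sq_add_cos_sq ((A - B) / 2)
    rw [show 2 * ((A - B) / 2) = A - B by ring, cos_sub] at hcos
    linear_combination (-4) * this + 4 * hcos + sin_sq_add_cos_sq A + sin_sq_add_cos_sq B
  rw [EuclideanSpace.dist_eq, Fin.sum_univ_two, Real.dist_eq, Real.dist_eq, sq_abs, sq_abs,
    hx.1, hx.2, hy.1, hy.2, hchord, sqrt_sq_eq_abs, abs_mul, abs_two]

lemma Real.one_half_le_sin {t : ℝ} (h₁ : π / 6 ≤ t) (h₂ : t ≤ π - π / 6) :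
    1 / 2 ≤ sin t := by
  rw [← sin_pi_div_six]
  rcases le_total t (π / 2) with h | h
  · exact sin_le_sin_of_le_of_le_pi_div_two (by linarith [pi_pos]) h h₁
  · rw [← sin_pi_sub t]
    exact sin_le_sin_of_le_of_le_pi_div_two (by linarith [pi_pos]) (by linarith) (by linarith)

def IsRegularPolygon {n : ℕ} (p : Fin n → EuclideanSpace ℝ (Fin 2)) : Prop :=
  ∀ j : Fin n, p j 0 = cos (2 * π * (j : ℝ) / (n : ℝ)) ∧
    p j 1 = sin (2 * π * (j : ℝ) / (n : ℝ))

namespace IsRegularPolygon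

variable {n : ℕ} [NeZero n] {p : Fin n → EuclideanSpace ℝ (Fin 2)}

lemma dist_add_natCast (hp : IsRegularPolygon p) (c : Fin n) (k : ℕ) :
    dist (p c) (p (c + k)) = 2 * |sin (π * k / n)| := by
  have hn : (n : ℝ) ≠ 0 := Nat.cast_ne_zero.2 (NeZero.ne n)
  set q := ((c : ℕ) + k) / n
  have hval : (((c + k : Fin n) : ℕ) : ℝ) = c + k - n * q := by
    rw [eq_sub_iff_add_eq]
    exact_mod_cast by
      rw [Fin.val_add, Fin.val_natCast, Nat.add_mod_mod, add_comm, Nat.div_add_mod]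
  have hangle : (2 * π * (c : ℝ) / n - 2 * π * ((c + k : Fin n) : ℝ) / n) / 2
      = -(π * k / n) + q * π := by
    rw [hval]
    field_simp
    ring
  rw [EuclideanSpace.dist_eq_two_mul_abs_sin (hp c) (hp (c + k)), hangle, sin_add_nat_mul_pi,
    abs_mul, abs_pow, abs_neg, abs_one, one_pow, one_mul, sin_neg, abs_neg]

lemma dist_add_one_le (hp : IsRegularPolygon p) (x : Fin n) :
    n / (2 * π) * dist (p x) (p (x + 1)) ≤ 1 := by
  have hn : (0 : ℝ) < n := Nat.cast_pos.2 (Nat.pos_of_neZero n)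
  calc n / (2 * π) * dist (p x) (p (x + 1)) ≤ n / (2 * π) * (2 * (π / n)) := by
        rw [← Nat.cast_one (R := Fin n), hp.dist_add_natCast, Nat.cast_one, mul_one]
        gcongr
        exact abs_sin_le_abs.trans (abs_of_pos (by positivity)).le
    _ = 1 := by field_simp

lemma one_le_dist_add_natCast (hp : IsRegularPolygon p) (c : Fin n) {k : ℕ}
    (hk : n ≤ 6 * k) (hk' : 6 * k ≤ 5 * n) : 1 ≤ dist (p c) (p (c + k)) := by
  have hn : (0 : ℝ) < n := Nat.cast_pos.2 (Nat.pos_of_neZero n)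
  have hk : (n : ℝ) ≤ 6 * k := by exact_mod_cast hk
  have hk' : 6 * (k : ℝ) ≤ 5 * n := by exact_mod_cast hk'
  have hsin : 1 / 2 ≤ sin (π * k / n) := one_half_le_sin
    (by rw [le_div_iff₀ hn]; nlinarith [pi_pos]) (by rw [div_le_iff₀ hn]; nlinarith [pi_pos])
  rw [hp.dist_add_natCast]
  linarith [le_abs_self (sin (π * k / n))]

end IsRegularPolygon

/-- Any spanning tree on n ≥ 6 points spread evenly on a circle has spanning
ratio at least n/(2π): some pair of points is joined in the tree only by paths
of length at least (n/(2π)) times their Euclidean distance. -/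
theorem spanning_tree_on_regular_ngon_ratio
    (n : ℕ) (hn : 6 ≤ n) (T : SimpleGraph (Fin n)) (hT : T.IsTree)
    (p : Fin n → EuclideanSpace ℝ (Fin 2))
    (hp : ∀ j : Fin n, p j 0 = Real.cos (2 * Real.pi * (j : ℝ) / (n : ℝ)) ∧
                       p j 1 = Real.sin (2 * Real.pi * (j : ℝ) / (n : ℝ))) :
    ∃ x y : Fin n, x ≠ y ∧ ∀ w : T.Walk x y,
      ((n : ℝ) / (2 * Real.pi)) * dist (p x) (p y) ≤ walkLength p w := by
  have : NeZero n := ⟨by omega⟩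
  replace hp : IsRegularPolygon p := hp
  obtain ⟨c, hc⟩ := hT.exists_isCentroid
  obtain ⟨k, hmk, hkm, hsep⟩ := hc.exists_step_not_reachableAvoiding (a := (n + 5) / 6)
    (b := n - (n + 5) / 6) (by omega) (by omega) (by omega)
  refine ⟨c + k, c + k + 1, fun h => ?_, fun w => ?_⟩
  · simp [Fin.ext_iff] at h
    omega
  have hcw : c ∈ w.support := by_contra fun h => hsep ⟨w, h⟩
  calc n / (2 * π) * dist (p (c + k)) (p (c + k + 1)) ≤ 1 := hp.dist_add_one_le _
    _ ≤ dist (p (c + k)) (p c) := by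
      rw [dist_comm]
      exact hp.one_le_dist_add_natCast c (by omega) (by omega)
    _ ≤ walkLength p w :=
      (le_add_of_nonneg_right dist_nonneg).trans (dist_add_dist_le_walkLength p w hcw)
end
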